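/- Let a, b, b' ∈ ℂ, c, c' ∈ ℂ \ ℤ_{≤0}, a − b ∉ ℤ, and fix x ∈ ℂ \ {0}. For any positive integer N, as y → 0 with |arg(−x/y)| < π, the Appell function satisfies F₂[a,b,b';c,c'; x/y, y] = f_c(b,a)(−x/y)^{−a} Σ_{m=0}^{N−1} c₁(m) y^m + f_c(a,b)(−x/y)^{−b} Σ_{m=0}^{N−1} c₂(m) y^m + O(|y|^{Re(a)+N} + |y|^{Re(b)+N}), where c₁(m) = Σ_{k+ℓ=m} (−k)_ℓ (b')_ℓ (a)_k (1−c+a)_k / ((c')_ℓ (1−b+a)_k ℓ! k!) x^{−k} and c₂(m) = Σ_{k+ℓ=m} (b')_ℓ (a−b−k)_ℓ (b)_k (1−c+b)_k / ((c')_ℓ (1−a+b)_k ℓ! k!) x^{−k}. -/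

import Mathlib

open Complex Filter Topology Asymptotics

/-- Pochhammer symbol (rising factorial) on `ℂ`. -/
noncomputable def poch (a : ℂ) (n : ℕ) : ℂ := (ascPochhammer ℂ n).eval a

/-- Gauss hypergeometric function `₂F₁[a, b; c; z]`. -/
noncomputable def F21 (a b c z : ℂ) : ℂ :=
  ∑' n : ℕ, poch a n * poch b n / (poch c n * (Nat.factorial n : ℂ)) * z ^ n

/-- `f_γ(a,b) := Γ(γ)Γ(a−b)/(Γ(a)Γ(γ−b))`. -/
noncomputable def fgam (γ a b : ℂ) : ℂ :=
  Complex.Gamma γ * Complex.Gamma (a - b) / (Complex.Gamma a * Complex.Gamma (γ - b))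

/-- The Appell function `F₂[a,b,b';c,c';x,y]` given by its analytic
continuation via Jaeger's formula, valid for `|y| < 1`, `|x| > |y| + 1`. -/
noncomputable def F2 (a b b' c c' x y : ℂ) : ℂ :=
  fgam c b a * (-x) ^ (-a) *
    (∑' n : ℕ, F21 (-(n : ℂ)) b' c' y *
      (poch a n * poch (1 - c + a) n /
        (poch (1 - b + a) n * (Nat.factorial n : ℂ))) * x⁻¹ ^ n)
  + fgam c a b * (-x) ^ (-b) *
    (∑' n : ℕ, F21 (a - b - n) b' c' y *
      (poch b n * poch (1 - c + b) n /
        (poch (1 - a + b) n * (Nat.factorial n : ℂ))) * x⁻¹ ^ n)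

/-- Coefficient `c₁(m)`. -/
noncomputable def coeffC1 (a b b' c c' x : ℂ) (m : ℕ) : ℂ :=
  ∑ k ∈ Finset.range (m + 1),
    poch (-(k : ℂ)) (m - k) * poch b' (m - k) * poch a k * poch (1 - c + a) k /
      (poch c' (m - k) * poch (1 - b + a) k *
        (Nat.factorial (m - k) : ℂ) * (Nat.factorial k : ℂ)) * x⁻¹ ^ k

/-- Coefficient `c₂(m)`. -/
noncomputable def coeffC2 (a b b' c c' x : ℂ) (m : ℕ) : ℂ :=
  ∑ k ∈ Finset.range (m + 1),
    poch b' (m - k) * poch (a - b - k) (m - k) * poch b k * poch (1 - c + b) k /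
      (poch c' (m - k) * poch (1 - a + b) k *
        (Nat.factorial (m - k) : ℂ) * (Nat.factorial k : ℂ)) * x⁻¹ ^ k

/-!
Substituting `x ↦ x / y` in Jaeger's formula turns each of its two series
`∑ₙ ₂F₁[αₙ, b'; c'; y] wₙ yⁿ` (with `αₙ = -n` or `a - b - n`) into a double series
`∑_{k,ℓ} u(k,ℓ) y^(k+ℓ)` whose coefficients grow at most geometrically: `(b)ₙ / (c)ₙ ≤ Mⁿ`
because `(b + n) / (c + n) → 1`, and `(α)_ℓ / ℓ! ≤ exp (|α| + ℓ)` absorbs the dependence of `αₖ`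
on `k`. Regrouped by total degree it is a power series in `y` with positive radius whose
coefficients are `c₁(m)`, resp. `c₂(m)`, so Taylor's formula bounds the remainder by `O(|y|^N)`.
Since `|arg| ≤ π`, the prefactors `(-x/y)^(-a)` and `(-x/y)^(-b)` are `O(|y|^Re a)` and
`O(|y|^Re b)`.
-/

open Finset

theorem poch_succ (a : ℂ) (n : ℕ) : poch a (n + 1) = poch a n * (a + n) :=
  ascPochhammer_succ_eval n a

theorem norm_poch_div_factorial_le (a : ℂ) (n : ℕ) :
    ‖poch a n / n.factorial‖ ≤ Real.exp (‖a‖ + n) := by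
  have hpow : ‖poch a n‖ ≤ (‖a‖ + n) ^ n := by
    induction n with
    | zero => simp [poch]
    | succ n ih =>
      rw [poch_succ, norm_mul, pow_succ]
      push_cast
      gcongr ?_ * ?_
      · exact ih.trans (by gcongr; linarith)
      · exact (norm_add_le _ _).trans (by simp)
  rw [norm_div, Complex.norm_natCast, div_le_iff₀ (by positivity)]
  calc ‖poch a n‖ ≤ (‖a‖ + n) ^ n := hpow
    _ ≤ Real.exp (‖a‖ + n) * n.factorial := by
      rw [← div_le_iff₀ (by positivity)]
      exact Real.pow_div_factorial_le_exp _ (by positivity) n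

-- Where `poch c n = 0` the quotient is the junk value `0`.
theorem exists_norm_poch_div_poch_le_pow (b c : ℂ) :
    ∃ M : ℝ, ∀ n, ‖poch b n / poch c n‖ ≤ M ^ n := by
  obtain ⟨M, hM⟩ :=
    (tendsto_add_mul_div_add_mul_atTop_nhds b c (1 : ℂ) one_ne_zero).norm.bddAbove_range
  refine ⟨M, fun n => ?_⟩
  induction n with
  | zero => simp [poch]
  | succ n ih =>
    rw [poch_succ, poch_succ, mul_div_mul_comm, norm_mul, pow_succ]
    exact mul_le_mul ih (by simpa using hM ⟨n, rfl⟩) (norm_nonneg _) ((norm_nonneg _).trans ih)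

theorem tsum_tsum_eq_tsum_sum_range {E : Type*} [NormedAddCommGroup E] [CompleteSpace E]
    {f : ℕ → ℕ → E} (hf : Summable fun p : ℕ × ℕ => f p.1 p.2) :
    ∑' k, ∑' ℓ, f k ℓ = ∑' m, ∑ k ∈ range (m + 1), f k (m - k) := by
  have hσ := HasAntidiagonal.sigmaAntidiagonalEquivProd.summable_iff.mpr hf
  rw [← hf.tsum_prod' (hf.prod_factor (f := fun p : ℕ × ℕ => f p.1 p.2)),
    ← HasAntidiagonal.sigmaAntidiagonalEquivProd.tsum_eq]
  refine (hσ.tsum_sigma' fun _ => .of_finite).trans (tsum_congr fun m => ?_)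
  rw [tsum_fintype, ← Nat.sum_antidiagonal_eq_sum_range_succ]
  exact sum_coe_sort (antidiagonal m) fun p => f p.1 p.2

theorem norm_sum_range_le_of_le_pow_add {E : Type*} [SeminormedAddCommGroup E]
    {u : ℕ → ℕ → E} {C K : ℝ} (hu : ∀ k ℓ, ‖u k ℓ‖ ≤ C * K ^ (k + ℓ)) (m : ℕ) :
    ‖∑ k ∈ range (m + 1), u k (m - k)‖ ≤ C * (2 * K) ^ m := calc
  ‖∑ k ∈ range (m + 1), u k (m - k)‖ ≤ ∑ k ∈ range (m + 1), C * K ^ m :=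
      norm_sum_le_of_le _ fun k hk => by
        simpa [Nat.add_sub_cancel' (mem_range_succ_iff.mp hk)] using hu k (m - k)
  _ = (m + 1) * (C * K ^ m) := by simp
  _ ≤ 2 ^ m * (C * K ^ m) := by
      have : 0 ≤ C * K ^ m := by simpa using (norm_nonneg _).trans (hu 0 m)
      gcongr
      exact_mod_cast Nat.lt_two_pow_self
  _ = C * (2 * K) ^ m := by ring

theorem summable_mul_pow_add_of_le_pow_add {𝕜 : Type*} [NormedField 𝕜] [CompleteSpace 𝕜]
    {u : ℕ → ℕ → 𝕜} {C K : ℝ} (hK : 0 ≤ K)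
    (hu : ∀ k ℓ, ‖u k ℓ‖ ≤ C * K ^ (k + ℓ)) {y : 𝕜} (hy : K * ‖y‖ < 1) :
    Summable fun q : ℕ × ℕ => u q.1 q.2 * y ^ (q.1 + q.2) := by
  have hgeom := summable_geometric_of_lt_one (by positivity) hy
  refine .of_norm_bounded ((hgeom.mul_of_nonneg hgeom (fun _ => by positivity)
    (fun _ => by positivity)).mul_left C) fun q => ?_
  rw [norm_mul, norm_pow]
  calc ‖u q.1 q.2‖ * ‖y‖ ^ (q.1 + q.2) ≤ C * K ^ (q.1 + q.2) * ‖y‖ ^ (q.1 + q.2) := by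
        gcongr; exact hu _ _
    _ = C * ((K * ‖y‖) ^ q.1 * (K * ‖y‖) ^ q.2) := by ring

theorem ofScalars_radius_pos_of_norm_le_pow {𝕜 : Type*} [NontriviallyNormedField 𝕜]
    {v : ℕ → 𝕜} {C K : ℝ} (hK : 0 ≤ K) (hv : ∀ m, ‖v m‖ ≤ C * K ^ m) :
    0 < (FormalMultilinearSeries.ofScalars 𝕜 v).radius := by
  have hC : 0 ≤ C := by simpa using (norm_nonneg _).trans (hv 0)
  obtain ⟨r, hr⟩ : ∃ r : NNReal, (r : ℝ) = (K + 1)⁻¹ := ⟨⟨_, by positivity⟩, rfl⟩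
  have hr0 : 0 < r := by rw [← NNReal.coe_pos, hr]; positivity
  refine (ENNReal.coe_pos.mpr hr0).trans_le (FormalMultilinearSeries.le_radius_of_bound _ C
    fun m => ?_)
  calc ‖FormalMultilinearSeries.ofScalars 𝕜 v m‖ * (r : ℝ) ^ m
      ≤ C * K ^ m * (K + 1)⁻¹ ^ m := by
        rw [FormalMultilinearSeries.ofScalars_norm, hr]; gcongr; exact hv m
    _ = C * (K / (K + 1)) ^ m := by ring
    _ ≤ C * 1 := by
        gcongr
        exact pow_le_one₀ (by positivity) ((div_le_one (by positivity)).mpr (by linarith))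
    _ = C := mul_one C

def GeomBounded {E : Type*} [Norm E] (u : ℕ → ℕ → E) : Prop :=
  ∃ C A B : ℝ, ∀ k ℓ, ‖u k ℓ‖ ≤ C * A ^ k * B ^ ℓ

namespace GeomBounded

theorem mul {R : Type*} [SeminormedRing R] {u v : ℕ → ℕ → R} (hu : GeomBounded u)
    (hv : GeomBounded v) : GeomBounded fun k ℓ => u k ℓ * v k ℓ := by
  obtain ⟨C, A, B, hu⟩ := hu
  obtain ⟨C', A', B', hv⟩ := hv
  refine ⟨C * C', A * A', B * B', fun k ℓ => ?_⟩
  calc ‖u k ℓ * v k ℓ‖ ≤ ‖u k ℓ‖ * ‖v k ℓ‖ := norm_mul_le _ _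
    _ ≤ (C * A ^ k * B ^ ℓ) * (C' * A' ^ k * B' ^ ℓ) :=
      mul_le_mul (hu k ℓ) (hv k ℓ) (norm_nonneg _) ((norm_nonneg _).trans (hu k ℓ))
    _ = C * C' * (A * A') ^ k * (B * B') ^ ℓ := by ring

theorem swap {E : Type*} [Norm E] {u : ℕ → ℕ → E} (hu : GeomBounded u) :
    GeomBounded fun k ℓ => u ℓ k := by
  obtain ⟨C, A, B, hu⟩ := hu
  exact ⟨C, B, A, fun k ℓ => (hu ℓ k).trans_eq (by ring)⟩

theorem exists_le_pow_add {E : Type*} [SeminormedAddGroup E] {u : ℕ → ℕ → E}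
    (hu : GeomBounded u) : ∃ C K : ℝ, 0 ≤ K ∧ ∀ k ℓ, ‖u k ℓ‖ ≤ C * K ^ (k + ℓ) := by
  obtain ⟨C, A, B, hu⟩ := hu
  have hC : 0 ≤ C := by simpa using (norm_nonneg _).trans (hu 0 0)
  refine ⟨C, max |A| |B|, by positivity, fun k ℓ => (hu k ℓ).trans ?_⟩
  rw [pow_add, mul_assoc]
  gcongr C * ?_
  calc A ^ k * B ^ ℓ ≤ |A ^ k * B ^ ℓ| := le_abs_self _
    _ = |A| ^ k * |B| ^ ℓ := by rw [abs_mul, abs_pow, abs_pow]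
    _ ≤ max |A| |B| ^ k * max |A| |B| ^ ℓ := by gcongr <;> simp

theorem isBigO_tsum_tsum_sub_sum_range {𝕜 : Type*} [NontriviallyNormedField 𝕜]
    [CompleteSpace 𝕜] {u : ℕ → ℕ → 𝕜} (hu : GeomBounded u) (N : ℕ) :
    (fun y : 𝕜 => ∑' k, ∑' ℓ, u k ℓ * y ^ (k + ℓ) -
      ∑ m ∈ range N, (∑ k ∈ range (m + 1), u k (m - k)) * y ^ m) =O[𝓝 0] fun y => ‖y‖ ^ N := by
  obtain ⟨C, K, hK, hCK⟩ := hu.exists_le_pow_add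
  set p := FormalMultilinearSeries.ofScalars 𝕜 fun m => ∑ k ∈ range (m + 1), u k (m - k)
  have hp : 0 < p.radius := ofScalars_radius_pos_of_norm_le_pow (by positivity)
    (norm_sum_range_le_of_le_pow_add hCK)
  refine ((p.hasFPowerSeriesOnBall hp).hasFPowerSeriesAt.isBigO_sub_partialSum_pow N).congr' ?_ .rfl
  filter_upwards [Metric.ball_mem_nhds (0 : 𝕜) (show 0 < (K + 1)⁻¹ by positivity)] with y hy
  have hKy : K * ‖y‖ < 1 := by
    have := mul_lt_mul_of_pos_left (mem_ball_zero_iff.mp hy) (by positivity : 0 < K + 1)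
    rw [mul_inv_cancel₀ (by positivity)] at this
    nlinarith [norm_nonneg y]
  rw [zero_add, tsum_tsum_eq_tsum_sum_range (f := fun k ℓ => u k ℓ * y ^ (k + ℓ))
    (summable_mul_pow_add_of_le_pow_add hK hCK hKy)]
  simp only [FormalMultilinearSeries.sum, FormalMultilinearSeries.partialSum,
    FormalMultilinearSeries.ofScalars_apply_eq, smul_eq_mul, p, sum_mul]
  congr 1
  refine tsum_congr fun m => sum_congr rfl fun k hk => ?_
  rw [Nat.add_sub_cancel' (mem_range_succ_iff.mp hk)]

end GeomBounded

theorem geomBounded_poch_div_factorial {α : ℕ → ℂ} {s : ℝ} (hα : ∀ k, ‖α k‖ ≤ s + k) :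
    GeomBounded fun k ℓ => poch (α k) ℓ / ℓ.factorial := by
  refine ⟨Real.exp s, Real.exp 1, Real.exp 1, fun k ℓ => ?_⟩
  calc ‖poch (α k) ℓ / ℓ.factorial‖ ≤ Real.exp (‖α k‖ + ℓ) := norm_poch_div_factorial_le _ _
    _ ≤ Real.exp (s + k + ℓ) := by gcongr; exact hα k
    _ = Real.exp s * Real.exp 1 ^ k * Real.exp 1 ^ ℓ := by
      rw [← Real.exp_nat_mul, ← Real.exp_nat_mul, ← Real.exp_add, ← Real.exp_add]; ring_nf

theorem geomBounded_poch_div_poch (b c : ℂ) : GeomBounded fun _ ℓ => poch b ℓ / poch c ℓ := by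
  obtain ⟨M, hM⟩ := exists_norm_poch_div_poch_le_pow b c
  exact ⟨1, 1, M, fun _ ℓ => by simpa using hM ℓ⟩

theorem geomBounded_pow (z : ℂ) : GeomBounded fun k _ => z ^ k :=
  ⟨1, ‖z‖, 1, fun _ _ => by simp⟩

noncomputable def jaegerTerm (α w : ℕ → ℂ) (b' c' : ℂ) (k ℓ : ℕ) : ℂ :=
  poch (α k) ℓ / ℓ.factorial * (poch b' ℓ / poch c' ℓ) * w k

theorem tsum_F21_mul_pow_eq (α w : ℕ → ℂ) (b' c' y : ℂ) :
    ∑' n, F21 (α n) b' c' y * w n * y ^ n =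
      ∑' k, ∑' ℓ, jaegerTerm α w b' c' k ℓ * y ^ (k + ℓ) := by
  refine tsum_congr fun k => ?_
  rw [F21, ← tsum_mul_right, ← tsum_mul_right]
  refine tsum_congr fun ℓ => ?_
  rw [jaegerTerm, pow_add]
  ring

theorem isBigO_tsum_F21_sub_sum_range {α w : ℕ → ℂ} {s : ℝ} (hα : ∀ k, ‖α k‖ ≤ s + k)
    (hw : GeomBounded fun k _ => w k) (b' c' : ℂ) (N : ℕ) :
    (fun y : ℂ => ∑' n, F21 (α n) b' c' y * w n * y ^ n -
      ∑ m ∈ range N, (∑ k ∈ range (m + 1), jaegerTerm α w b' c' k (m - k)) * y ^ m)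
      =O[𝓝 0] fun y => ‖y‖ ^ N := by
  simp only [tsum_F21_mul_pow_eq]
  exact (((geomBounded_poch_div_factorial hα).mul (geomBounded_poch_div_poch b' c')).mul
    hw).isBigO_tsum_tsum_sub_sum_range N

noncomputable def jaegerWeight (p q r x : ℂ) (n : ℕ) : ℂ :=
  poch p n * poch q n / (poch r n * n.factorial) * x⁻¹ ^ n

theorem geomBounded_jaegerWeight (p q r x : ℂ) :
    GeomBounded fun k _ => jaegerWeight p q r x k := by
  have hw : (fun k (_ : ℕ) => jaegerWeight p q r x k) =
      fun k _ => poch p k / poch r k * (poch q k / k.factorial) * x⁻¹ ^ k := by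
    funext k _
    rw [jaegerWeight]
    ring
  rw [hw]
  exact ((geomBounded_poch_div_poch p r).mul (geomBounded_poch_div_factorial (α := fun _ => q)
    (s := ‖q‖) (by simp))).swap.mul (geomBounded_pow x⁻¹)

theorem F2_div_eq (a b b' c c' x y : ℂ) :
    F2 a b b' c c' (x / y) y =
      fgam c b a * (-(x / y)) ^ (-a) *
          ∑' n : ℕ, F21 (-(n : ℂ)) b' c' y * jaegerWeight a (1 - c + a) (1 - b + a) x n * y ^ n +
        fgam c a b * (-(x / y)) ^ (-b) *
          ∑' n : ℕ, F21 (a - b - n) b' c' y * jaegerWeight b (1 - c + b) (1 - a + b) x n *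
            y ^ n := by
  have hpow (n : ℕ) : (x / y)⁻¹ ^ n = x⁻¹ ^ n * y ^ n := by
    rw [inv_div, div_eq_mul_inv, mul_pow, mul_comm]
  rw [F2]
  congr 2 <;> refine tsum_congr fun n => ?_ <;> rw [jaegerWeight, hpow] <;> ring

theorem coeffC1_eq (a b b' c c' x : ℂ) (m : ℕ) :
    coeffC1 a b b' c c' x m = ∑ k ∈ range (m + 1),
      jaegerTerm (fun n => -(n : ℂ)) (jaegerWeight a (1 - c + a) (1 - b + a) x) b' c' k (m - k) :=
  sum_congr rfl fun _ _ => by rw [jaegerTerm, jaegerWeight]; ring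

theorem coeffC2_eq (a b b' c c' x : ℂ) (m : ℕ) :
    coeffC2 a b b' c c' x m = ∑ k ∈ range (m + 1),
      jaegerTerm (fun n => a - b - n) (jaegerWeight b (1 - c + b) (1 - a + b) x) b' c' k (m - k) :=
  sum_congr rfl fun _ _ => by rw [jaegerTerm, jaegerWeight]; ring

theorem isBigO_neg_div_cpow_neg (l : Filter ℂ) (x a : ℂ) :
    (fun y : ℂ => (-(x / y)) ^ (-a)) =O[l] fun y => ‖y‖ ^ a.re := by
  refine .of_bound (‖x‖ ^ (-a.re) * Real.exp (Real.pi * |a.im|)) (.of_forall fun y => ?_)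
  have harg : Real.exp (-(arg (-(x / y)) * (-a).im)) ≤ Real.exp (Real.pi * |a.im|) := by
    gcongr
    calc -(arg (-(x / y)) * (-a).im) = arg (-(x / y)) * a.im := by simp
      _ ≤ |arg (-(x / y))| * |a.im| := by rw [← abs_mul]; exact le_abs_self _
      _ ≤ Real.pi * |a.im| := by gcongr; exact abs_arg_le_pi _
  rw [Real.norm_of_nonneg (by positivity)]
  calc ‖(-(x / y)) ^ (-a)‖
      ≤ ‖-(x / y)‖ ^ (-a).re * Real.exp (-(arg (-(x / y)) * (-a).im)) := by
        rw [Real.exp_neg, ← div_eq_mul_inv]; exact norm_cpow_le _ _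
    _ ≤ ‖-(x / y)‖ ^ (-a).re * Real.exp (Real.pi * |a.im|) := by gcongr
    _ = ‖x‖ ^ (-a.re) * Real.exp (Real.pi * |a.im|) * ‖y‖ ^ a.re := by
        rw [norm_neg, norm_div, neg_re, Real.div_rpow (norm_nonneg _) (norm_nonneg _),
          Real.rpow_neg (norm_nonneg y), div_inv_eq_mul]
        ring

theorem F2_small_y_asymptotics_general (a b b' c c' x : ℂ)
    (N : ℕ) :
    (fun y : ℂ =>
        F2 a b b' c c' (x / y) y -
          (fgam c b a * (-(x / y)) ^ (-a) *
              ∑ m ∈ Finset.range N, coeffC1 a b b' c c' x m * y ^ m +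
            fgam c a b * (-(x / y)) ^ (-b) *
              ∑ m ∈ Finset.range N, coeffC2 a b b' c c' x m * y ^ m))
      =O[nhdsWithin (0 : ℂ)
          {y : ℂ | ¬((-(x / y)).im = 0 ∧ (-(x / y)).re ≤ 0)}]
      fun y : ℂ => ‖y‖ ^ (a.re + N) + ‖y‖ ^ (b.re + N) := by
  set l := 𝓝[{y : ℂ | ¬((-(x / y)).im = 0 ∧ (-(x / y)).re ≤ 0)}] 0
  have hy : ∀ᶠ y in l, y ≠ 0 := eventually_mem_nhdsWithin.mono fun y hy h0 => hy (by simp [h0])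
  have hterm (d e : ℂ) {f : ℂ → ℂ} (hf : f =O[𝓝 0] fun y => ‖y‖ ^ N) :
      (fun y => d * (-(x / y)) ^ (-e) * f y) =O[l] fun y => ‖y‖ ^ (e.re + N) :=
    (((isBigO_neg_div_cpow_neg l x e).const_mul_left d).mul
      (hf.mono nhdsWithin_le_nhds)).trans_eventuallyEq
        (hy.mono fun y hy => (Real.rpow_add_natCast (norm_ne_zero_iff.mpr hy) _ _).symm)
  have h₁ := hterm (fgam c b a) a (isBigO_tsum_F21_sub_sum_range (α := fun n => -(n : ℂ))
    (s := 0) (by simp) (geomBounded_jaegerWeight a (1 - c + a) (1 - b + a) x) b' c' N)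
  have h₂ := hterm (fgam c a b) b (isBigO_tsum_F21_sub_sum_range (α := fun n => a - b - n)
    (s := ‖a - b‖) (fun k => by simpa using norm_sub_le (a - b) k)
    (geomBounded_jaegerWeight b (1 - c + b) (1 - a + b) x) b' c' N)
  refine (h₁.add_add h₂).congr (fun y => ?_) (fun y => ?_)
  · rw [F2_div_eq]
    simp only [coeffC1_eq, coeffC2_eq]
    ring
  · rw [Real.norm_of_nonneg (by positivity), Real.norm_of_nonneg (by positivity)]

/-- Asymptotics of the Appell function `F₂[x/y, y]` as `y → 0` with
`|arg(−x/y)| < π`. -/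
theorem F2_small_y_asymptotics (a b b' c c' x : ℂ)
    (hc : ∀ n : ℕ, c ≠ -n) (hc' : ∀ n : ℕ, c' ≠ -n)
    (hab : ∀ n : ℤ, a - b ≠ n) (hx : x ≠ 0) (N : ℕ) (hN : 0 < N) :
    (fun y : ℂ =>
        F2 a b b' c c' (x / y) y -
          (fgam c b a * (-(x / y)) ^ (-a) *
              ∑ m ∈ Finset.range N, coeffC1 a b b' c c' x m * y ^ m +
            fgam c a b * (-(x / y)) ^ (-b) *
              ∑ m ∈ Finset.range N, coeffC2 a b b' c c' x m * y ^ m))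
      =O[nhdsWithin (0 : ℂ)
          {y : ℂ | ¬((-(x / y)).im = 0 ∧ (-(x / y)).re ≤ 0)}]
      fun y : ℂ => ‖y‖ ^ (a.re + N) + ‖y‖ ^ (b.re + N) :=
  F2_small_y_asymptotics_general a b b' c c' x N
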